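/- arXiv:0907.1436 — 3 statements merged into one kernel-verified Lean document; each statement's English description precedes it below -/
import Mathlib

section
/- Let (x_t) solve the recursion x_{t+1} = x_t − sat_r(x_t) + w_t in R^d, where (w_t) are random vectors with sup_t E[‖w_t‖] ≤ C₁ < r. Define ξ_t = ‖x_t‖ and let (𝔉_t) be the natural filtration, with w_t independent of 𝔉_t. Then on the event {ξ_t > r}, E[ξ_{t+1} − ξ_t | 𝔉_t] ≤ −(r − C₁). -/
/-!
Outside the ball of radius `r` the saturation removes exactly length `r` in the radial
direction, so `‖x_{t+1}‖ ≤ ‖x_t‖ - r + ‖w_t‖` there. Conditioning on `ℱ t` preserves this bound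
on the `ℱ t`-measurable event `{r < ‖x_t‖}`, and since `w_t` is independent of `ℱ t` the
conditional expectation of `‖w_t‖` is its mean, which is at most `C₁`.
-/

open MeasureTheory ProbabilityTheory

noncomputable def sat {d : ℕ} (r : ℝ) (y : EuclideanSpace ℝ (Fin d)) :
    EuclideanSpace ℝ (Fin d) :=
  if ‖y‖ ≤ r then y else (r / ‖y‖) • y

lemma norm_sub_sat_of_lt {d : ℕ} {r : ℝ} {y : EuclideanSpace ℝ (Fin d)} (hr : 0 ≤ r)
    (hy : r < ‖y‖) : ‖y - sat r y‖ = ‖y‖ - r := by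
  have hy_pos : 0 < ‖y‖ := hr.trans_lt hy
  have hshrink : y - sat r y = (1 - r / ‖y‖) • y := by
    rw [sat, if_neg hy.not_ge, sub_smul, one_smul]
  have hfactor : 0 ≤ 1 - r / ‖y‖ := sub_nonneg.mpr ((div_lt_one hy_pos).mpr hy).le
  rw [hshrink, norm_smul, Real.norm_of_nonneg hfactor, sub_mul, one_mul,
    div_mul_cancel₀ r hy_pos.ne']

lemma norm_sub_sat_add_le {d : ℕ} {r : ℝ} {y : EuclideanSpace ℝ (Fin d)} (hr : 0 ≤ r)
    (hy : r < ‖y‖) (v : EuclideanSpace ℝ (Fin d)) :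
    ‖y - sat r y + v‖ ≤ ‖y‖ - r + ‖v‖ :=
  (norm_add_le _ _).trans_eq (by rw [norm_sub_sat_of_lt hr hy])

lemma ae_condExp_le_condExp_of_ae_le_on {Ω : Type*} {m m0 : MeasurableSpace Ω}
    {μ : Measure Ω} {f g : Ω → ℝ} {s : Set Ω} (hm : m ≤ m0) (hs : MeasurableSet[m] s)
    (hf : Integrable f μ) (hg : Integrable g μ) (hfg : ∀ᵐ ω ∂μ, ω ∈ s → f ω ≤ g ω) :
    ∀ᵐ ω ∂μ, ω ∈ s → μ[f | m] ω ≤ μ[g | m] ω := by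
  have hmono : μ[s.indicator f | m] ≤ᵐ[μ] μ[s.indicator g | m] := by
    refine condExp_mono (hf.indicator (hm s hs)) (hg.indicator (hm s hs)) ?_
    filter_upwards [hfg] with ω hω
    by_cases hωs : ω ∈ s
    · simpa only [Set.indicator_of_mem hωs] using hω hωs
    · simp only [Set.indicator_of_notMem hωs, le_refl]
  filter_upwards [hmono, condExp_indicator hf hs, condExp_indicator hg hs]
    with ω hle hf_eq hg_eq hωs
  simpa only [hf_eq, hg_eq, Set.indicator_of_mem hωs] using hle

theorem stmt5_general {d : ℕ} {Ω : Type*} {m0 : MeasurableSpace Ω} {μ : Measure Ω}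
    [IsProbabilityMeasure μ] (ℱ : Filtration ℕ m0)
    (r C₁ : ℝ) (hC₁ : 0 < C₁) (hr : C₁ < r)
    (x w : ℕ → Ω → EuclideanSpace ℝ (Fin d))
    (hx_adapted : Adapted ℱ x)
    (hw_meas : ∀ t, Measurable (w t))
    (hw_int : ∀ t, Integrable (w t) μ)
    (hw_indep : ∀ t, Indep (MeasurableSpace.comap (w t) inferInstance) (ℱ t) μ)
    (hw_abs : ∀ t, ∫ ω, ‖w t ω‖ ∂μ ≤ C₁)
    (hrec : ∀ t ω, x (t + 1) ω = x t ω - sat r (x t ω) + w t ω)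
    (hx_int : ∀ t, Integrable (fun ω => ‖x t ω‖) μ)
    (t : ℕ) :
    ∀ᵐ ω ∂μ, r < ‖x t ω‖ →
      (μ[fun ω' => ‖x (t + 1) ω'‖ - ‖x t ω'‖ | ℱ t]) ω ≤ -(r - C₁) := by
  have hr₀ : 0 ≤ r := (hC₁.trans hr).le
  have hstep : ∀ ω, r < ‖x t ω‖ → ‖x (t + 1) ω‖ - ‖x t ω‖ ≤ -r + ‖w t ω‖ := fun ω hω => by
    linarith [hrec t ω ▸ norm_sub_sat_add_le hr₀ hω (w t ω)]
  have hevent : MeasurableSet[ℱ t] {ω | r < ‖x t ω‖} :=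
    measurable_norm.comp (hx_adapted t) measurableSet_Ioi
  have hnoise : μ[fun ω => -r + ‖w t ω‖ | ℱ t] =ᵐ[μ] fun _ => ∫ ω, -r + ‖w t ω‖ ∂μ :=
    condExp_indep_eq (hw_meas t).comap_le (ℱ.le t)
      (measurable_const.add (measurable_norm.comp (comap_measurable (w t)))).stronglyMeasurable (hw_indep t)
  have hmean : ∫ ω, -r + ‖w t ω‖ ∂μ ≤ -(r - C₁) := by
    rw [integral_add (integrable_const _) (hw_int t).norm, integral_const, probReal_univ,
      one_smul]
    linarith [hw_abs t]
  filter_upwards [ae_condExp_le_condExp_of_ae_le_on (ℱ.le t) hevent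
      ((hx_int (t + 1)).sub (hx_int t)) ((integrable_const _).add (hw_int t).norm)
      (ae_of_all μ hstep), hnoise] with ω hle hnoise_eq hω
  exact (hle hω).trans (hnoise_eq ▸ hmean)

/-- drift condition for the saturated random walk
`x_{t+1} = x_t − sat_r(x_t) + w_t`: if `sup_t E[‖w_t‖] ≤ C₁ < r`, `ξ_t = ‖x_t‖`, the process
is adapted to the filtration `ℱ` and `w_t` is independent of `ℱ t`, then on `{ξ_t > r}` we
have `E[ξ_{t+1} − ξ_t | ℱ t] ≤ −(r − C₁)`. -/
theorem stmt5 {d : ℕ} {Ω : Type*} {m0 : MeasurableSpace Ω} {μ : Measure Ω}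
    [IsProbabilityMeasure μ] (ℱ : Filtration ℕ m0)
    (r C₁ : ℝ) (hC₁ : 0 < C₁) (hr : C₁ < r)
    (x w : ℕ → Ω → EuclideanSpace ℝ (Fin d))
    (hx_adapted : Adapted ℱ x)
    (hw_meas : ∀ t, Measurable (w t))
    (hw_int : ∀ t, Integrable (w t) μ)
    (hw_mean : ∀ t, ∫ ω, w t ω ∂μ = 0)
    (hw_indep : ∀ t, Indep (MeasurableSpace.comap (w t) inferInstance) (ℱ t) μ)
    (hw_abs : ∀ t, ∫ ω, ‖w t ω‖ ∂μ ≤ C₁)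
    (hrec : ∀ t ω, x (t + 1) ω = x t ω - sat r (x t ω) + w t ω)
    (hx_int : ∀ t, Integrable (fun ω => ‖x t ω‖) μ)
    (t : ℕ) :
    ∀ᵐ ω ∂μ, r < ‖x t ω‖ →
      (μ[fun ω' => ‖x (t + 1) ω'‖ - ‖x t ω'‖ | ℱ t]) ω ≤ -(r - C₁) :=
  stmt5_general ℱ r C₁ hC₁ hr x w hx_adapted hw_meas hw_int hw_indep hw_abs hrec hx_int t
end

section
/- Deterministic finite-time convergence of the saturated closed loop: let A be an orthogonal d×d matrix, r > 0, and consider the deterministic recursion x_{τ+1} = A x_τ − A sat_r(x_τ) with x_0 = x ∈ R^d. Then there exists a finite time τ̄ (one may take τ̄ = ⌈‖x‖/r⌉) such that x_τ = 0 for all τ ≥ τ̄. -/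
/-!
The error `y - sat r y` has norm `max (‖y‖ - r) 0`, and an orthogonal matrix preserves norms, so
`‖x (τ + 1)‖ = max (‖x τ‖ - r) 0`. Hence `‖x τ‖ = max (‖x 0‖ - τ r) 0`, which vanishes once
`τ ≥ ⌈‖x 0‖ / r⌉`.
-/

open Matrix

theorem Matrix.norm_toEuclideanLin_of_conjTranspose_mul_self {𝕜 n : Type*} [RCLike 𝕜]
    [Fintype n] [DecidableEq n] {A : Matrix n n 𝕜} (hA : Aᴴ * A = 1) (v : EuclideanSpace 𝕜 n) :
    ‖toEuclideanLin A v‖ = ‖v‖ := by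
  have hcomp : toEuclideanLin Aᴴ (toEuclideanLin A v) = v := by
    simp [toLpLin_apply, mulVec_mulVec, hA]
  have hinner : inner 𝕜 (toEuclideanLin A v) (toEuclideanLin A v) = inner 𝕜 v v := by
    rw [← LinearMap.adjoint_inner_right, ← toEuclideanLin_conjTranspose_eq_adjoint, hcomp]
  rw [← sq_eq_sq₀ (norm_nonneg _) (norm_nonneg _), ← RCLike.ofReal_inj (K := 𝕜)]
  simpa only [inner_self_eq_norm_sq_to_K, RCLike.ofReal_pow] using hinner

theorem norm_sub_sat {d : ℕ} {r : ℝ} (hr : 0 ≤ r) (y : EuclideanSpace ℝ (Fin d)) :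
    ‖y - sat r y‖ = max (‖y‖ - r) 0 := by
  unfold sat
  split_ifs with hy
  · rw [sub_self, norm_zero, max_eq_right (by linarith)]
  · have hlt : r < ‖y‖ := not_le.mp hy
    have hpos : 0 < ‖y‖ := hr.trans_lt hlt
    have hfrac : r / ‖y‖ ≤ 1 := (div_le_one hpos).mpr hlt.le
    have hfactor : y - (r / ‖y‖) • y = (1 - r / ‖y‖) • y := by rw [sub_smul, one_smul]
    rw [hfactor, norm_smul, Real.norm_of_nonneg (sub_nonneg.mpr hfrac), sub_mul, one_mul,
      div_mul_cancel₀ _ hpos.ne', max_eq_left (by linarith)]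

theorem eq_max_sub_mul_of_forall_succ_eq_max {u : ℕ → ℝ} {r : ℝ} (hr : 0 ≤ r) (h0 : 0 ≤ u 0)
    (hu : ∀ n, u (n + 1) = max (u n - r) 0) (n : ℕ) : u n = max (u 0 - n * r) 0 := by
  induction n with
  | zero => simpa using h0
  | succ n ih =>
    rw [hu, ih, Nat.cast_succ]
    rcases le_total (u 0 - n * r) 0 with h | h
    · rw [max_eq_right h, max_eq_right (by linarith), max_eq_right (by linarith)]
    · rw [max_eq_left h, add_mul, one_mul, sub_add_eq_sub_sub]

theorem eq_zero_of_ceil_div_le {u : ℕ → ℝ} {r : ℝ} (hr : 0 < r) (h0 : 0 ≤ u 0)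
    (hu : ∀ n, u (n + 1) = max (u n - r) 0) {n : ℕ} (hn : ⌈u 0 / r⌉₊ ≤ n) : u n = 0 := by
  have hle : u 0 ≤ n * r := (div_le_iff₀ hr).mp (Nat.ceil_le.mp hn)
  rw [eq_max_sub_mul_of_forall_succ_eq_max hr.le h0 hu, max_eq_right (by linarith)]

theorem stmt7_general {d : ℕ} (r : ℝ) (hr : 0 < r) (A : Matrix (Fin d) (Fin d) ℝ)
    (hA : Aᵀ * A = 1)
    (x : ℕ → EuclideanSpace ℝ (Fin d))
    (hrec : ∀ τ, x (τ + 1) =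
      Matrix.toEuclideanLin A (x τ) - Matrix.toEuclideanLin A (sat r (x τ))) :
    ∃ τbar : ℕ, ∀ τ ≥ τbar, x τ = 0 := by
  have hA' : Aᴴ * A = 1 := by rwa [conjTranspose_eq_transpose_of_trivial]
  have hnorm : ∀ τ, ‖x (τ + 1)‖ = max (‖x τ‖ - r) 0 := fun τ => by
    rw [hrec, ← map_sub, norm_toEuclideanLin_of_conjTranspose_mul_self hA', norm_sub_sat hr.le]
  refine ⟨⌈‖x 0‖ / r⌉₊, fun τ hτ => norm_eq_zero.mp ?_⟩
  exact eq_zero_of_ceil_div_le (u := fun τ => ‖x τ‖) hr (norm_nonneg _) hnorm hτ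

/-- deterministic finite-time convergence of the saturated closed loop
`x_{τ+1} = A x_τ − A sat_r(x_τ)` with `A` orthogonal: there is a finite time `τ̄`
(one may take `τ̄ = ⌈‖x‖/r⌉`) such that `x_τ = 0` for all `τ ≥ τ̄`. -/
theorem stmt7 {d : ℕ} (r : ℝ) (hr : 0 < r) (A : Matrix (Fin d) (Fin d) ℝ)
    (hA : Aᵀ * A = 1) (x₀ : EuclideanSpace ℝ (Fin d))
    (x : ℕ → EuclideanSpace ℝ (Fin d)) (hx0 : x 0 = x₀)
    (hrec : ∀ τ, x (τ + 1) =
      Matrix.toEuclideanLin A (x τ) - Matrix.toEuclideanLin A (sat r (x τ))) :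
    ∃ τbar : ℕ, ∀ τ ≥ τbar, x τ = 0 :=
  stmt7_general r hr A hA x hrec
end

section
/- Suppose a process in R^d satisfies x_{t+1} = A x_t + B u_t + w_t with A orthogonal, ‖u_t‖ ≤ ρ for all t, E[w_t] = 0, E[‖w_t‖²] ≤ √C₄ for all t, w_t independent of x_t and u_t measurable with respect to the past, and suppose the sub-sampled process satisfies sup_τ E[‖x_{τk}‖²] ≤ c. Then for every n ∈ {0,…,k−1}, sup_τ E[‖x_{τk+n}‖²] ≤ 2(c + n² ρ² σ₁(B)²) + k√C₄, where σ₁(B) is the largest singular value of B; hence sup_t E[‖x_t‖²] < ∞. -/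
open Matrix MeasureTheory ProbabilityTheory

/-!
Write `q t = E‖x_t‖²` and `y_t = A x_t + B u_t`, so that `x_{t+1} = y_t + w_t`. As `A` is an
isometry, `|‖y_t‖ - ‖x_t‖| ≤ ‖B u_t‖ ≤ s := ρ‖B‖`, so by Minkowski's inequality the `L²` norms
of `y_t` and `x_t` differ by at most `s`. As `w_t` is centred and independent of `y_t`,
`q (t + 1) = E‖y_t‖² + E‖w_t‖²`, where `0 ≤ E‖w_t‖² ≤ σ := √C₄`.

Propagating forward from `τk` gives `√q(τk+n) ≤ √(c + nσ) + ns`, which yields the bound when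
`2n ≤ k`. Propagating backward from `(τ+1)k` costs no noise term and gives
`√q(τk+n) ≤ √c + (k-n)s`, which yields the bound when `2n > k`.
-/

theorem Matrix.norm_toEuclideanLin_of_transpose_mul_self {n : Type*} [Fintype n]
    [DecidableEq n] {A : Matrix n n ℝ} (hA : Aᵀ * A = 1) (v : EuclideanSpace ℝ n) :
    ‖toEuclideanLin A v‖ = ‖v‖ := by
  rw [← sq_eq_sq₀ (norm_nonneg _) (norm_nonneg _), ← real_inner_self_eq_norm_sq,
    ← real_inner_self_eq_norm_sq, ← LinearMap.adjoint_inner_right,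
    ← toEuclideanLin_conjTranspose_eq_adjoint, conjTranspose_eq_transpose_of_trivial]
  congr 1
  ext i
  simp [mulVec_mulVec, hA]

theorem Matrix.abs_norm_toEuclideanLin_add_sub_norm_le {n : Type*} [Fintype n] [DecidableEq n]
    {A : Matrix n n ℝ} (hA : Aᵀ * A = 1) (v z : EuclideanSpace ℝ n) :
    |‖toEuclideanLin A v + z‖ - ‖v‖| ≤ ‖z‖ := by
  simpa [norm_toEuclideanLin_of_transpose_mul_self hA] using
    abs_norm_sub_norm_le (toEuclideanLin A v + z) (toEuclideanLin A v)

theorem Real.sqrt_sq_add_le {a b σ : ℝ} (ha : 0 ≤ a) (hb : 0 ≤ b) (hσ : 0 ≤ σ) :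
    √((√a + b) ^ 2 + σ) ≤ √(a + σ) + b := by
  rw [Real.sqrt_le_left (by positivity)]
  have : √a ≤ √(a + σ) := Real.sqrt_le_sqrt (by linarith)
  nlinarith [Real.sq_sqrt ha, Real.sq_sqrt (add_nonneg ha hσ)]

section
variable {p q : ℕ → ℝ} {s σ c : ℝ}

theorem sqrt_le_of_forward_step (hs : 0 ≤ s) (hσ : 0 ≤ σ) (hc : 0 ≤ c) {t₀ : ℕ} (h₀ : q t₀ ≤ c)
    (hstep : ∀ t, √(q (t + 1)) ≤ √((√(q t) + s) ^ 2 + σ)) (j : ℕ) :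
    √(q (t₀ + j)) ≤ √(c + j * σ) + j * s := by
  induction j with
  | zero => simpa using Real.sqrt_le_sqrt h₀
  | succ j ih =>
    calc √(q (t₀ + (j + 1))) ≤ √((√(q (t₀ + j)) + s) ^ 2 + σ) := hstep _
      _ ≤ √((√(c + j * σ) + (j + 1) * s) ^ 2 + σ) := by
        gcongr √((?_ : ℝ) ^ 2 + σ)
        linarith
      _ ≤ √(c + j * σ + σ) + (j + 1) * s := Real.sqrt_sq_add_le (by positivity) (by positivity) hσ
      _ = √(c + ↑(j + 1) * σ) + ↑(j + 1) * s := by push_cast; ring_nf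

theorem sqrt_le_of_backward_step (hstep : ∀ t, √(q t) ≤ √(q (t + 1)) + s) (t₀ j : ℕ) :
    √(q t₀) ≤ √(q (t₀ + j)) + j * s := by
  induction j generalizing t₀ with
  | zero => simp
  | succ j ih =>
    rw [show t₀ + (j + 1) = t₀ + 1 + j by omega]
    push_cast
    linarith [ih (t₀ + 1), hstep t₀]

theorem le_of_le_at_multiples {k n : ℕ} (hc : 0 ≤ c)
    (hpq : ∀ t, p t ≤ q (t + 1)) (hqp : ∀ t, q (t + 1) ≤ p t + σ)
    (hdist : ∀ t, |√(p t) - √(q t)| ≤ s) (hsub : ∀ τ, q (τ * k) ≤ c) (hn : n < k) (τ : ℕ) :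
    q (τ * k + n) ≤ 2 * (c + n ^ 2 * s ^ 2) + k * σ := by
  have hs : 0 ≤ s := (abs_nonneg _).trans (hdist 0)
  have hσ : 0 ≤ σ := by linarith [hpq 0, hqp 0]
  have hforward (t : ℕ) : √(q (t + 1)) ≤ √((√(q t) + s) ^ 2 + σ) := by
    have hp : p t ≤ (√(q t) + s) ^ 2 :=
      calc p t ≤ √(p t) ^ 2 := Real.sq_sqrt' ▸ le_max_left _ _
        _ ≤ (√(q t) + s) ^ 2 := by
          gcongr
          linarith [(abs_sub_le_iff.1 (hdist t)).1]
    exact Real.sqrt_le_sqrt (by linarith [hqp t])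
  have hbackward (t : ℕ) : √(q t) ≤ √(q (t + 1)) + s := by
    linarith [(abs_sub_le_iff.1 (hdist t)).2, Real.sqrt_le_sqrt (hpq t)]
  rcases le_or_gt (2 * n) k with hnk | hnk
  · have h := sqrt_le_of_forward_step hs hσ hc (hsub τ) hforward n
    calc q (τ * k + n) ≤ (√(c + n * σ) + n * s) ^ 2 := (Real.sqrt_le_iff.1 h).2
      _ ≤ 2 * (√(c + n * σ) ^ 2 + (n * s) ^ 2) := add_sq_le
      _ = 2 * (c + n ^ 2 * s ^ 2) + 2 * n * σ := by rw [Real.sq_sqrt (by positivity)]; ring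
      _ ≤ 2 * (c + n ^ 2 * s ^ 2) + k * σ := by gcongr; exact_mod_cast hnk
  · have h := sqrt_le_of_backward_step hbackward (τ * k + n) (k - n)
    rw [show τ * k + n + (k - n) = (τ + 1) * k by rw [add_mul]; omega] at h
    have hkn : ((k - n : ℕ) : ℝ) ≤ n := by exact_mod_cast (by omega)
    calc q (τ * k + n) ≤ (√c + (k - n : ℕ) * s) ^ 2 := by
          refine (Real.sqrt_le_iff.1 (h.trans ?_)).2
          gcongr
          exact hsub _
      _ ≤ 2 * (√c ^ 2 + ((k - n : ℕ) * s) ^ 2) := add_sq_le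
      _ ≤ 2 * (c + n ^ 2 * s ^ 2) := by rw [Real.sq_sqrt hc, mul_pow]; gcongr
      _ ≤ 2 * (c + n ^ 2 * s ^ 2) + k * σ := le_add_of_nonneg_right (by positivity)

end

section
variable {Ω : Type*} {m0 : MeasurableSpace Ω} {μ : Measure Ω}

theorem integral_le_sqrt_integral_sq [IsProbabilityMeasure μ] {g : Ω → ℝ} (hg : MemLp g 2 μ) :
    ∫ ω, g ω ∂μ ≤ √(∫ ω, g ω ^ 2 ∂μ) := by
  have h := variance_nonneg g μ
  rw [variance_eq_sub hg] at h
  exact Real.le_sqrt_of_sq_le (by simpa using h)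

theorem sqrt_integral_sq_le_add [IsProbabilityMeasure μ] {f g : Ω → ℝ} {s : ℝ} (hs : 0 ≤ s)
    (hf : MemLp f 2 μ) (hg : MemLp g 2 μ) (hf0 : ∀ ω, 0 ≤ f ω) (hfg : ∀ ω, f ω ≤ g ω + s) :
    √(∫ ω, f ω ^ 2 ∂μ) ≤ √(∫ ω, g ω ^ 2 ∂μ) + s := by
  have hg_int := hg.integrable one_le_two
  have hg_sq := hg.integrable_sq
  rw [Real.sqrt_le_left (by positivity)]
  calc ∫ ω, f ω ^ 2 ∂μ ≤ ∫ ω, g ω ^ 2 + 2 * s * g ω + s ^ 2 ∂μ := by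
        refine integral_mono hf.integrable_sq (by fun_prop) fun ω => ?_
        nlinarith [hf0 ω, hfg ω]
    _ = ∫ ω, g ω ^ 2 ∂μ + 2 * s * ∫ ω, g ω ∂μ + s ^ 2 := by
        rw [integral_add (by fun_prop) (by fun_prop), integral_add hg_sq (by fun_prop),
          integral_const_mul]
        simp
    _ ≤ (√(∫ ω, g ω ^ 2 ∂μ) + s) ^ 2 := by
        have hmean := integral_le_sqrt_integral_sq hg
        have hsq : √(∫ ω, g ω ^ 2 ∂μ) ^ 2 = ∫ ω, g ω ^ 2 ∂μ :=
          Real.sq_sqrt (integral_nonneg fun ω => sq_nonneg (g ω))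
        nlinarith

theorem abs_sqrt_integral_sq_sub_le [IsProbabilityMeasure μ] {f g : Ω → ℝ} {s : ℝ}
    (hf : MemLp f 2 μ) (hg : MemLp g 2 μ) (hf0 : ∀ ω, 0 ≤ f ω) (hg0 : ∀ ω, 0 ≤ g ω)
    (hfg : ∀ ω, |f ω - g ω| ≤ s) :
    |√(∫ ω, f ω ^ 2 ∂μ) - √(∫ ω, g ω ^ 2 ∂μ)| ≤ s := by
  have hs : 0 ≤ s := (abs_nonneg _).trans (hfg (nonempty_of_isProbabilityMeasure μ).some)
  have hfg' (ω : Ω) := abs_sub_le_iff.1 (hfg ω)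
  refine abs_sub_le_iff.2 ⟨sub_le_iff_le_add'.2 ?_, sub_le_iff_le_add'.2 ?_⟩
  · exact sqrt_integral_sq_le_add hs hf hg hf0 fun ω => sub_le_iff_le_add'.1 (hfg' ω).1
  · exact sqrt_integral_sq_le_add hs hg hf hg0 fun ω => sub_le_iff_le_add'.1 (hfg' ω).2

theorem integral_norm_add_sq_of_indepFun [IsFiniteMeasure μ] {E : Type*} [NormedAddCommGroup E]
    [InnerProductSpace ℝ E] [CompleteSpace E] [MeasurableSpace E] [BorelSpace E]
    {Y W : Ω → E} (hYW : Y ⟂ᵢ[μ] W) (hY : MemLp Y 2 μ) (hW : MemLp W 2 μ) (hW0 : μ[W] = 0) :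
    ∫ ω, ‖Y ω + W ω‖ ^ 2 ∂μ = ∫ ω, ‖Y ω‖ ^ 2 ∂μ + ∫ ω, ‖W ω‖ ^ 2 ∂μ := by
  have hinner : ∫ ω, inner ℝ (Y ω) (W ω) ∂μ = 0 := by
    rw [← inner_zero_right (𝕜 := ℝ) μ[Y], ← hW0]
    exact hYW.integral_bilin (hY.integrable one_le_two) (hW.integrable one_le_two)
      (innerSL ℝ)
  have hinner_int : Integrable (fun ω => inner ℝ (Y ω) (W ω)) μ :=
    hYW.integrable_bilin (hY.integrable one_le_two) (hW.integrable one_le_two) (innerSL ℝ)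
  have hY2 := (memLp_two_iff_integrable_sq_norm hY.1).1 hY
  have hW2 := (memLp_two_iff_integrable_sq_norm hW.1).1 hW
  simp_rw [norm_add_sq_real]
  rw [integral_add (hY2.fun_add (hinner_int.const_mul 2)) hW2,
    integral_add hY2 (hinner_int.const_mul 2), integral_const_mul, hinner]
  ring
end

theorem stmt18_general {d m k : ℕ} (hk : 0 < k) {Ω : Type*} {m0 : MeasurableSpace Ω}
    (μ : Measure Ω) [IsProbabilityMeasure μ] (ℱ : Filtration ℕ m0)
    (A : Matrix (Fin d) (Fin d) ℝ) (hA : Aᵀ * A = 1)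
    (B : Matrix (Fin d) (Fin m) ℝ)
    (ρ C₄ c : ℝ) (hc : 0 ≤ c)
    (x : ℕ → Ω → EuclideanSpace ℝ (Fin d))
    (u : ℕ → Ω → EuclideanSpace ℝ (Fin m))
    (w : ℕ → Ω → EuclideanSpace ℝ (Fin d))
    (hx_adapted : Adapted ℱ x) (hu_adapted : Adapted ℱ u)
    (hw_meas : ∀ t, Measurable (w t))
    (hw_indep : ∀ t, Indep (MeasurableSpace.comap (w t) inferInstance) (ℱ t) μ)
    (hw_int2 : ∀ t, Integrable (fun ω => ‖w t ω‖ ^ 2) μ)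
    (hw_mean : ∀ t, ∫ ω, w t ω ∂μ = 0)
    (hw_mom2 : ∀ t, ∫ ω, ‖w t ω‖ ^ 2 ∂μ ≤ Real.sqrt C₄)
    (hu_bdd : ∀ t ω, ‖u t ω‖ ≤ ρ)
    (hrec : ∀ t ω, x (t + 1) ω = Matrix.toEuclideanLin A (x t ω)
      + Matrix.toEuclideanLin B (u t ω) + w t ω)
    (hx_int2 : ∀ t, Integrable (fun ω => ‖x t ω‖ ^ 2) μ)
    (hsub : ∀ τ : ℕ, ∫ ω, ‖x (τ * k) ω‖ ^ 2 ∂μ ≤ c) :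
    (∀ n < k, ∀ τ : ℕ, ∫ ω, ‖x (τ * k + n) ω‖ ^ 2 ∂μ ≤
      2 * (c + (n : ℝ) ^ 2 * ρ ^ 2
          * ‖LinearMap.toContinuousLinearMap (Matrix.toEuclideanLin B)‖ ^ 2)
        + (k : ℝ) * Real.sqrt C₄) ∧
    ∃ c' : ℝ, ∀ t, ∫ ω, ‖x t ω‖ ^ 2 ∂μ ≤ c' := by
  set L := LinearMap.toContinuousLinearMap (Matrix.toEuclideanLin B)
  set y : ℕ → Ω → EuclideanSpace ℝ (Fin d) := fun t ω =>
    toEuclideanLin A (x t ω) + toEuclideanLin B (u t ω)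
  have hy_meas (t : ℕ) : StronglyMeasurable[ℱ t] (y t) :=
    ((LinearMap.toContinuousLinearMap (toEuclideanLin A)).continuous.comp_stronglyMeasurable
      (hx_adapted t).stronglyMeasurable).add
      (L.continuous.comp_stronglyMeasurable (hu_adapted t).stronglyMeasurable)
  have hx2 (t : ℕ) : MemLp (x t) 2 μ := (memLp_two_iff_integrable_sq_norm
    ((hx_adapted t).stronglyMeasurable.mono (ℱ.le t)).aestronglyMeasurable).2 (hx_int2 t)
  have hy2 (t : ℕ) : MemLp (y t) 2 μ :=
    ((LinearMap.toContinuousLinearMap (toEuclideanLin A)).comp_memLp' (hx2 t)).add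
      (L.comp_memLp' (.of_bound
        ((hu_adapted t).stronglyMeasurable.mono (ℱ.le t)).aestronglyMeasurable ρ
        (ae_of_all _ (hu_bdd t))))
  have hnoise (t : ℕ) :
      ∫ ω, ‖x (t + 1) ω‖ ^ 2 ∂μ = ∫ ω, ‖y t ω‖ ^ 2 ∂μ + ∫ ω, ‖w t ω‖ ^ 2 ∂μ := by
    simp_rw [hrec]
    exact integral_norm_add_sq_of_indepFun
      (indep_of_indep_of_le_right (hw_indep t) (hy_meas t).measurable.comap_le).symm (hy2 t)
      ((memLp_two_iff_integrable_sq_norm (hw_meas t).aestronglyMeasurable).2 (hw_int2 t))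
      (hw_mean t)
  have hdist (t : ℕ) : |√(∫ ω, ‖y t ω‖ ^ 2 ∂μ) - √(∫ ω, ‖x t ω‖ ^ 2 ∂μ)| ≤ ρ * ‖L‖ := by
    refine abs_sqrt_integral_sq_sub_le (hy2 t).norm (hx2 t).norm (fun _ => norm_nonneg _)
      (fun _ => norm_nonneg _) fun ω => ?_
    calc |‖y t ω‖ - ‖x t ω‖| ≤ ‖L (u t ω)‖ := abs_norm_toEuclideanLin_add_sub_norm_le hA _ _
      _ ≤ ‖L‖ * ‖u t ω‖ := L.le_opNorm _
      _ ≤ ρ * ‖L‖ := by rw [mul_comm]; gcongr; exact hu_bdd t ω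
  have hblock {n : ℕ} (hn : n < k) (τ : ℕ) := le_of_le_at_multiples (σ := √C₄) hc
    (fun t => by rw [hnoise]; exact le_add_of_nonneg_right (integral_nonneg fun _ => by positivity))
    (fun t => by rw [hnoise]; linarith [hw_mom2 t]) hdist hsub hn τ
  refine ⟨fun n hn τ => (hblock hn τ).trans_eq (by ring),
    2 * (c + k ^ 2 * (ρ * ‖L‖) ^ 2) + k * √C₄, fun t => ?_⟩
  rw [← Nat.div_add_mod' t k]
  refine (hblock (Nat.mod_lt t hk) (t / k)).trans ?_
  gcongr
  exact_mod_cast (Nat.mod_lt t hk).le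

/-- if `x_{t+1} = A x_t + B u_t + w_t` with `A` orthogonal, `‖u_t‖ ≤ ρ`,
mean-zero noise with `E[‖w_t‖²] ≤ √C₄` independent of the past, and the sub-sampled process
satisfies `sup_τ E[‖x_{τk}‖²] ≤ c`, then for every `n ∈ {0,…,k−1}` one has
`sup_τ E[‖x_{τk+n}‖²] ≤ 2(c + n² ρ² σ₁(B)²) + k √C₄`, where `σ₁(B)` is the largest singular
value (operator norm) of `B`; hence `sup_t E[‖x_t‖²] < ∞`. -/
theorem stmt18 {d m k : ℕ} (hk : 0 < k) {Ω : Type*} {m0 : MeasurableSpace Ω}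
    (μ : Measure Ω) [IsProbabilityMeasure μ] (ℱ : Filtration ℕ m0)
    (A : Matrix (Fin d) (Fin d) ℝ) (hA : Aᵀ * A = 1)
    (B : Matrix (Fin d) (Fin m) ℝ)
    (ρ C₄ c : ℝ) (hρ : 0 ≤ ρ) (hC₄ : 0 ≤ C₄) (hc : 0 ≤ c)
    (x : ℕ → Ω → EuclideanSpace ℝ (Fin d))
    (u : ℕ → Ω → EuclideanSpace ℝ (Fin m))
    (w : ℕ → Ω → EuclideanSpace ℝ (Fin d))
    (hx_adapted : Adapted ℱ x) (hu_adapted : Adapted ℱ u)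
    (hw_meas : ∀ t, Measurable (w t))
    (hw_indep : ∀ t, Indep (MeasurableSpace.comap (w t) inferInstance) (ℱ t) μ)
    (hw_int : ∀ t, Integrable (w t) μ)
    (hw_int2 : ∀ t, Integrable (fun ω => ‖w t ω‖ ^ 2) μ)
    (hw_mean : ∀ t, ∫ ω, w t ω ∂μ = 0)
    (hw_mom2 : ∀ t, ∫ ω, ‖w t ω‖ ^ 2 ∂μ ≤ Real.sqrt C₄)
    (hu_bdd : ∀ t ω, ‖u t ω‖ ≤ ρ)
    (hrec : ∀ t ω, x (t + 1) ω = Matrix.toEuclideanLin A (x t ω)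
      + Matrix.toEuclideanLin B (u t ω) + w t ω)
    (hx_int2 : ∀ t, Integrable (fun ω => ‖x t ω‖ ^ 2) μ)
    (hsub : ∀ τ : ℕ, ∫ ω, ‖x (τ * k) ω‖ ^ 2 ∂μ ≤ c) :
    (∀ n < k, ∀ τ : ℕ, ∫ ω, ‖x (τ * k + n) ω‖ ^ 2 ∂μ ≤
      2 * (c + (n : ℝ) ^ 2 * ρ ^ 2
          * ‖LinearMap.toContinuousLinearMap (Matrix.toEuclideanLin B)‖ ^ 2)
        + (k : ℝ) * Real.sqrt C₄) ∧
    ∃ c' : ℝ, ∀ t, ∫ ω, ‖x t ω‖ ^ 2 ∂μ ≤ c' :=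
  stmt18_general hk μ ℱ A hA B ρ C₄ c hc x u w hx_adapted hu_adapted hw_meas hw_indep hw_int2
    hw_mean hw_mom2 hu_bdd hrec hx_int2 hsub
end
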